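/- Let G be a finite graph on n vertices with independence number α(G) > n/2. Then the set of vertices of G that belong to every maximum independent set of G has cardinality at least 2·α(G) − n. -/

import Mathlib

/-- A finset of vertices is independent: no two of its elements are adjacent. -/
def IsIndepF {V : Type*} (G : SimpleGraph V) (s : Finset V) : Prop :=
  ∀ a ∈ s, ∀ b ∈ s, ¬ G.Adj a b

/-- The independence number of a finite graph: the maximum size of an independent set. -/
noncomputable def indepNum {V : Type*} [Fintype V] (G : SimpleGraph V) : ℕ :=
  sSup {n | ∃ s : Finset V, IsIndepF G s ∧ s.card = n}

/-- A maximum independent set: an independent set whose size is the independence number. -/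
def IsMaxIndep {V : Type*} [Fintype V] (G : SimpleGraph V) (s : Finset V) : Prop :=
  IsIndepF G s ∧ s.card = indepNum G

lemma card_le_indepNum {V : Type*} [Fintype V] (G : SimpleGraph V) {s : Finset V}
    (hs : IsIndepF G s) : s.card ≤ indepNum G :=
  le_csSup ⟨Fintype.card V, fun n ⟨t, _, ht⟩ => ht ▸ Finset.card_le_univ t⟩ ⟨s, hs, rfl⟩

lemma exists_maxIndep {V : Type*} [Fintype V] (G : SimpleGraph V) :
    ∃ s : Finset V, IsMaxIndep G s := by
  have hne : {n | ∃ s : Finset V, IsIndepF G s ∧ s.card = n}.Nonempty :=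
    ⟨0, ∅, fun a ha => absurd ha (Finset.notMem_empty a), Finset.card_empty⟩
  have hbdd : BddAbove {n | ∃ s : Finset V, IsIndepF G s ∧ s.card = n} :=
    ⟨Fintype.card V, fun n ⟨t, _, ht⟩ => ht ▸ Finset.card_le_univ t⟩
  obtain ⟨s, hs, hc⟩ := Nat.sSup_mem hne hbdd
  exact ⟨s, hs, hc⟩

/-- Key exchange step: if `I` is independent and no vertex of `U` is adjacent to a
vertex of `I`, then intersecting with / unioning another maximum independent set `S`
does not decrease `|I| + |U|`. -/
lemma key_step {V : Type*} [Fintype V] [DecidableEq V] (G : SimpleGraph V) (I U S : Finset V)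
    (hI : IsIndepF G I)
    (hUI : ∀ v ∈ U, ∀ i ∈ I, ¬ G.Adj i v)
    (hS : IsMaxIndep G S) :
    I.card + U.card ≤ (I ∩ S).card + (U ∪ S).card := by
  classical
  set A := S.filter (fun v => ∃ i ∈ I, G.Adj i v) with hAdef
  have hAS : A ⊆ S := Finset.filter_subset _ _
  have hAsub : A ⊆ S \ U := by
    intro v hv
    rw [hAdef, Finset.mem_filter] at hv
    obtain ⟨hvS, i, hi, hadj⟩ := hv
    refine Finset.mem_sdiff.mpr ⟨hvS, fun hvU => hUI v hvU i hi hadj⟩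
  set T := I ∪ (S \ A) with hTdef
  have hT : IsIndepF G T := by
    intro a ha b hb hadj
    rw [hTdef, Finset.mem_union] at ha hb
    rcases ha with haI | haS <;> rcases hb with hbI | hbS
    · exact hI a haI b hbI hadj
    · rw [Finset.mem_sdiff] at hbS
      exact hbS.2 (by rw [hAdef, Finset.mem_filter]; exact ⟨hbS.1, a, haI, hadj⟩)
    · rw [Finset.mem_sdiff] at haS
      exact haS.2 (by rw [hAdef, Finset.mem_filter]; exact ⟨haS.1, b, hbI, hadj.symm⟩)
    · exact hS.1 a (Finset.mem_sdiff.mp haS).1 b (Finset.mem_sdiff.mp hbS).1 hadj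
  have hTcard : T.card ≤ S.card := by
    rw [hS.2]; exact card_le_indepNum G hT
  have hdisj : Disjoint (I \ S) (S \ A) := by
    refine Finset.disjoint_left.mpr fun v hv hv' => ?_
    exact (Finset.mem_sdiff.mp hv).2 (Finset.mem_sdiff.mp hv').1
  have hsubT : (I \ S) ∪ (S \ A) ⊆ T := by
    refine Finset.union_subset_union Finset.sdiff_subset (Finset.Subset.refl _)
  have h2 : (I \ S).card + (S \ A).card ≤ T.card := by
    rw [← Finset.card_union_of_disjoint hdisj]
    exact Finset.card_le_card hsubT
  have h3 : (S \ A).card + A.card = S.card := by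
    rw [Finset.card_sdiff_of_subset hAS]
    exact Nat.sub_add_cancel (Finset.card_le_card hAS)
  have h4 : A.card ≤ (S \ U).card := Finset.card_le_card hAsub
  have h5 : (I \ S).card ≤ A.card := by omega
  have e1 : (I \ S).card + (I ∩ S).card = I.card :=
    Finset.card_sdiff_add_card_inter I S
  have e2 : (S \ U).card + U.card = (U ∪ S).card := by
    rw [Finset.union_comm]
    exact Finset.card_sdiff_add_card S U
  omega

lemma family_bound {V : Type*} [Fintype V] [DecidableEq V] (G : SimpleGraph V) (F : Finset (Finset V))
    (hF : ∀ s ∈ F, IsMaxIndep G s) (S₀ : Finset V) (hS₀ : IsMaxIndep G S₀) :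
    2 * indepNum G ≤ (F.inf id ⊓ S₀).card + (F.sup id ⊔ S₀).card := by
  classical
  induction F using Finset.induction_on with
  | empty =>
    simp only [Finset.inf_empty, Finset.sup_empty, top_inf_eq, bot_sup_eq]
    have h0 := hS₀.2
    omega
  | insert S F' hnm ih =>
    have hS : IsMaxIndep G S := hF S (Finset.mem_insert_self S F')
    have hF' : ∀ s ∈ F', IsMaxIndep G s := fun s hs => hF s (Finset.mem_insert_of_mem hs)
    have ih' := ih hF'
    set I := F'.inf id ⊓ S₀ with hIdef
    set U := F'.sup id ⊔ S₀ with hUdef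
    have hIindep : IsIndepF G I := by
      intro a ha b hb
      exact hS₀.1 a (Finset.mem_of_subset inf_le_right ha)
        b (Finset.mem_of_subset inf_le_right hb)
    have hUI : ∀ v ∈ U, ∀ i ∈ I, ¬ G.Adj i v := by
      intro v hv i hi
      rw [hUdef] at hv
      rcases Finset.mem_union.mp hv with hv' | hv'
      · obtain ⟨s, hsF, hvs⟩ := Finset.mem_sup.mp hv'
        have his : i ∈ s :=
          Finset.mem_of_subset (le_trans inf_le_left (Finset.inf_le hsF)) hi
        exact (hF' s hsF).1 i his v hvs
      · exact hS₀.1 i (Finset.mem_of_subset inf_le_right hi) v hv'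
    have hk := key_step G I U S hIindep hUI hS
    have einf : (insert S F').inf id ⊓ S₀ = I ∩ S := by
      rw [Finset.inf_insert, ← Finset.inf_eq_inter]
      simp only [id_eq]
      rw [inf_assoc, inf_comm]
    have esup : (insert S F').sup id ⊔ S₀ = U ∪ S := by
      rw [Finset.sup_insert, ← Finset.sup_eq_union]
      simp only [id_eq]
      rw [sup_assoc, sup_comm]
    rw [einf, esup]
    omega

/-- If `α(G) > n/2` then at least `2α(G) - n` vertices belong to every maximum
independent set of `G`. -/
theorem common_vertices_of_large_indepNum (V : Type*) [Fintype V] (G : SimpleGraph V)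
    (h : Fintype.card V < 2 * indepNum G) :
    2 * indepNum G - Fintype.card V ≤
      Set.ncard {v : V | ∀ s : Finset V, IsMaxIndep G s → v ∈ s} := by
  classical
  obtain ⟨S₀, hS₀⟩ := exists_maxIndep G
  set F : Finset (Finset V) := Finset.univ.filter (fun s => IsMaxIndep G s) with hFdef
  have hF : ∀ s ∈ F, IsMaxIndep G s := by
    intro s hs; rw [hFdef, Finset.mem_filter] at hs; exact hs.2
  have hb := family_bound G F hF S₀ hS₀
  set C := F.inf id ⊓ S₀ with hCdef
  have hCsub : (↑C : Set V) ⊆ {v : V | ∀ s : Finset V, IsMaxIndep G s → v ∈ s} := by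
    intro v hv
    intro s hs
    have hsF : s ∈ F := by rw [hFdef, Finset.mem_filter]; exact ⟨Finset.mem_univ s, hs⟩
    have : v ∈ F.inf id := Finset.mem_of_subset inf_le_left hv
    exact Finset.mem_of_subset (Finset.inf_le hsF) this
  have hcard : C.card ≤ Set.ncard {v : V | ∀ s : Finset V, IsMaxIndep G s → v ∈ s} := by
    rw [← Set.ncard_coe_finset C]
    exact Set.ncard_le_ncard hCsub (Set.toFinite _)
  have hU : (F.sup id ⊔ S₀).card ≤ Fintype.card V := Finset.card_le_univ _
  omega
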